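/- Let M be a unique expansion matroid on a finite ground set E with rank r(M) > 0. Then the base family of M consists exactly of the sets obtained by selecting one and only one element from each block of the forming base family F(M); that is, B ∈ B(M) if and only if B ⊆ ⋃ F(M) and |B ∩ K| = 1 for every K ∈ F(M). -/

import Mathlib

open Set

variable {α : Type*}

/-- The rank of a set `X` in a matroid `M`: the largest cardinality of an
independent subset of `X`. -/
noncomputable def Matroid.rSet (M : Matroid α) (X : Set α) : ℕ :=
  sSup {n | ∃ I, M.Indep I ∧ I ⊆ X ∧ I.ncard = n}

/-- The rank of a matroid `M`. -/
noncomputable def Matroid.rank (M : Matroid α) : ℕ :=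
  M.rSet M.E

/-- A secondary base of `M` is an independent set of cardinality `r(M) - 1`. -/
def Matroid.SecondaryBase (M : Matroid α) (A : Set α) : Prop :=
  M.Indep A ∧ A.ncard = M.rank - 1

/-- `K_M(X) = {a ∈ E | r(X ∪ {a}) = r(X) + 1}`. -/
def Matroid.K (M : Matroid α) (X : Set α) : Set α :=
  {a ∈ M.E | M.rSet (X ∪ {a}) = M.rSet X + 1}

/-- The forming base family `F(M) = {K_M(A) | A a secondary base of M}`. -/
def Matroid.FBF (M : Matroid α) : Set (Set α) :=
  {D | ∃ A, M.SecondaryBase A ∧ D = M.K A}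

/-- The forming base family of `M` with respect to a base `B`:
`F_M(B) = {K_M(A) | A a secondary base of M with A ⊆ B}`. -/
def Matroid.FBFwrt (M : Matroid α) (B : Set α) : Set (Set α) :=
  {D | ∃ A, M.SecondaryBase A ∧ A ⊆ B ∧ D = M.K A}

/-- A family `P` of sets is a partition of `S` if `∅ ∉ P`, `⋃ P = S`, and
distinct members of `P` are disjoint. -/
def IsPartitionOn (P : Set (Set α)) (S : Set α) : Prop :=
  ∅ ∉ P ∧ ⋃₀ P = S ∧ ∀ K ∈ P, ∀ L ∈ P, K ≠ L → K ∩ L = ∅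

/-- `M` is a unique expansion matroid if for every base `B` and secondary base `A`,
there is at most one element of `B` completing `A` to a base. -/
def Matroid.UniqueExpansion (M : Matroid α) : Prop :=
  ∀ B, M.IsBase B → ∀ A, M.SecondaryBase A → ∀ e₁ ∈ B, ∀ e₂ ∈ B,
    M.IsBase (A ∪ {e₁}) → M.IsBase (A ∪ {e₂}) → e₁ = e₂

/-- `M` is a union minimal matroid if no proper subfamily of its base family with
the same union is the base family of a matroid on the same ground set. -/
def Matroid.UnionMinimal (M : Matroid α) : Prop :=
  ∀ M₁ : Matroid α, M₁.E = M.E → {B | M₁.IsBase B} ⊆ {B | M.IsBase B} →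
    ⋃₀ {B | M₁.IsBase B} = ⋃₀ {B | M.IsBase B} → {B | M₁.IsBase B} = {B | M.IsBase B}

/-- `M` is an intersection minimal matroid if no proper subfamily of its base family
with the same intersection is the base family of a matroid on the same ground set. -/
def Matroid.InterMinimal (M : Matroid α) : Prop :=
  ∀ M₁ : Matroid α, M₁.E = M.E → {B | M₁.IsBase B} ⊆ {B | M.IsBase B} →
    ⋂₀ {B | M₁.IsBase B} = ⋂₀ {B | M.IsBase B} → {B | M₁.IsBase B} = {B | M.IsBase B}

/-- `M` is a unique exchange matroid if for bases `B₁, B₂` and `x ∈ B₁ - B₂`, there is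
at most one `y ∈ B₂ - B₁` with `(B₁ - {x}) ∪ {y}` a base. -/
def Matroid.UniqueExchange (M : Matroid α) : Prop :=
  ∀ B₁ B₂, M.IsBase B₁ → M.IsBase B₂ → ∀ x ∈ B₁ \ B₂, ∀ y₁ ∈ B₂ \ B₁, ∀ y₂ ∈ B₂ \ B₁,
    M.IsBase ((B₁ \ {x}) ∪ {y₁}) → M.IsBase ((B₁ \ {x}) ∪ {y₂}) → y₁ = y₂


namespace MatroidAux

open Set Matroid

variable {α : Type*} {M : Matroid α} {I X A B : Set α} {a : α}

lemma rSet_eq_of_basis' (hE : M.E.Finite) (hI : M.IsBasis' I X) : M.rSet X = I.ncard := by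
  have hIfin : I.Finite := hE.subset hI.indep.subset_ground
  apply le_antisymm
  · refine csSup_le ⟨I.ncard, I, hI.indep, hI.subset, rfl⟩ ?_
    rintro n ⟨J, hJ, hJX, rfl⟩
    by_contra hlt
    push_neg at hlt
    have hJfin : J.Finite := hE.subset hJ.subset_ground
    have hen : I.encard < J.encard := by
      rw [← hIfin.cast_ncard_eq, ← hJfin.cast_ncard_eq]
      exact_mod_cast hlt
    obtain ⟨e, he, hei⟩ := hI.indep.augment hJ hen
    exact hI.insert_not_indep ⟨hJX he.1, he.2⟩ hei
  · refine le_csSup ⟨M.E.ncard, ?_⟩ ⟨I, hI.indep, hI.subset, rfl⟩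
    rintro n ⟨J, hJ, hJX, rfl⟩
    exact ncard_le_ncard hJ.subset_ground hE

lemma rSet_indep (hE : M.E.Finite) (hI : M.Indep I) : M.rSet I = I.ncard :=
  rSet_eq_of_basis' hE hI.isBasis_self.isBasis'

lemma rank_eq (hE : M.E.Finite) (hB : M.IsBase B) : M.rank = B.ncard :=
  rSet_eq_of_basis' hE hB.isBasis_ground.isBasis'

lemma base_of_indep_ncard (hE : M.E.Finite) (hI : M.Indep I) (hc : I.ncard = M.rank) :
    M.IsBase I := by
  obtain ⟨B, hB, hIB⟩ := hI.exists_isBase_superset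
  have : I = B := Set.eq_of_subset_of_ncard_le hIB (by rw [hc, rank_eq hE hB])
    (hE.subset hB.subset_ground)
  rwa [this]

lemma mem_K_iff (hE : M.E.Finite) (hr : 0 < M.rank) (hA : M.SecondaryBase A) :
    a ∈ M.K A ↔ M.IsBase (A ∪ {a}) := by
  have hAfin : A.Finite := hE.subset hA.1.subset_ground
  have hrA : M.rSet A = M.rank - 1 := by rw [rSet_indep hE hA.1, hA.2]
  rw [union_singleton]
  constructor
  · rintro ⟨haE, hK⟩
    rw [union_singleton] at hK
    have hrk : M.rSet (insert a A) = M.rank := by rw [hK, hrA]; omega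
    obtain ⟨I, hI⟩ := M.exists_isBasis' (insert a A)
    have hIc : I.ncard = M.rank := by rw [← rSet_eq_of_basis' hE hI, hrk]
    have hle : (insert a A).ncard ≤ M.rank := by
      have h1 := Set.ncard_insert_le a A
      have h2 := hA.2
      omega
    have hIeq : I = insert a A := Set.eq_of_subset_of_ncard_le hI.subset
      (by rw [hIc]; exact hle) (hAfin.insert a)
    exact base_of_indep_ncard hE (hIeq ▸ hI.indep) (hIeq ▸ hIc)
  · intro hB
    have haE : a ∈ M.E := hB.subset_ground (mem_insert a A)
    refine ⟨haE, ?_⟩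
    rw [union_singleton, rSet_indep hE hB.indep, ← rank_eq hE hB, hrA]
    omega

end MatroidAux

open MatroidAux in
theorem stmt_8 (M : Matroid α) (hE : M.E.Finite) (hr : 0 < M.rank)
    (hM : M.UniqueExpansion) (B : Set α) :
    M.IsBase B ↔ B ⊆ ⋃₀ M.FBF ∧ ∀ K ∈ M.FBF, (B ∩ K).ncard = 1 := by
  have hbase_card : ∀ B', M.IsBase B' → B'.ncard = M.rank := fun B' hB' => (rank_eq hE hB').symm
  have hindfin : ∀ I, M.Indep I → I.Finite := fun I hI => hE.subset hI.subset_ground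
  have hsec : ∀ B', M.IsBase B' → ∀ b ∈ B', M.SecondaryBase (B' \ {b}) := by
    intro B' hB' b hb
    refine ⟨hB'.indep.subset diff_subset, ?_⟩
    rw [Set.ncard_diff_singleton_of_mem hb, hbase_card _ hB']
  have haug : ∀ A, M.SecondaryBase A → ∀ B', M.IsBase B' →
      ∃ e ∈ B' \ A, M.IsBase (A ∪ {e}) := by
    intro A hA B' hB'
    have hAfin := hindfin _ hA.1
    have hen : A.encard < B'.encard := by
      rw [← hAfin.cast_ncard_eq, ← (hindfin _ hB'.indep).cast_ncard_eq]
      have h1 := hA.2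
      have h2 := hbase_card _ hB'
      exact_mod_cast (by omega : A.ncard < B'.ncard)
    obtain ⟨e, he, hei⟩ := hA.1.augment hB'.indep hen
    refine ⟨e, he, ?_⟩
    rw [union_singleton]
    refine base_of_indep_ncard hE hei ?_
    rw [Set.ncard_insert_of_notMem he.2 hAfin, hA.2]
    omega
  constructor
  · intro hB
    constructor
    · intro b hb
      refine ⟨M.K (B \ {b}), ⟨B \ {b}, hsec B hB b hb, rfl⟩, ?_⟩
      rw [mem_K_iff hE hr (hsec B hB b hb), union_singleton,
        Set.insert_diff_singleton, insert_eq_of_mem hb]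
      exact hB
    · rintro K ⟨A, hA, rfl⟩
      obtain ⟨e, he, heB⟩ := haug A hA B hB
      have heK : e ∈ M.K A := (mem_K_iff hE hr hA).mpr heB
      have : B ∩ M.K A = {e} := by
        apply Set.eq_singleton_iff_unique_mem.mpr
        refine ⟨⟨he.1, heK⟩, ?_⟩
        rintro x ⟨hxB, hxK⟩
        exact hM B hB A hA x hxB e he.1 ((mem_K_iff hE hr hA).mp hxK) heB
      rw [this, Set.ncard_singleton]
  · rintro ⟨hBsub, hBcard⟩
    have hBasesFin : {B' | M.IsBase B'}.Finite :=
      (hE.finite_subsets).subset (fun B' hB' => hB'.subset_ground)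
    obtain ⟨B₁, hB₁⟩ := M.exists_isBase
    obtain ⟨B₀, hB₀, hmax⟩ := Set.Finite.exists_maximalFor (fun X => (X ∩ B).ncard)
      {B' | M.IsBase B'} hBasesFin ⟨B₁, hB₁⟩
    simp only [Set.mem_setOf_eq] at hB₀ hmax
    have hB₀fin := hindfin _ hB₀.indep
    have hsub1 : B₀ ⊆ B := by
      by_contra hcon
      obtain ⟨x, hxB₀, hxB⟩ := not_subset.mp hcon
      have hA := hsec B₀ hB₀ x hxB₀
      obtain ⟨b, hbmem⟩ := Set.ncard_eq_one.mp (hBcard _ ⟨_, hA, rfl⟩)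
      have hb : b ∈ B ∩ M.K (B₀ \ {x}) := by rw [hbmem]; exact rfl
      have hbase1 : M.IsBase ((B₀ \ {x}) ∪ {b}) := (mem_K_iff hE hr hA).mp hb.2
      have hbnB₀ : b ∉ B₀ := by
        intro hbB₀
        have hbne : b ≠ x := fun h => hxB (h ▸ hb.1)
        have hbmem2 : b ∈ B₀ \ {x} := ⟨hbB₀, hbne⟩
        have heq : (B₀ \ {x}) ∪ {b} = B₀ \ {x} := by
          rw [union_singleton, insert_eq_of_mem hbmem2]
        rw [heq] at hbase1
        have h1 := hbase_card _ hbase1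
        have h2 := hA.2
        omega
      have hins : insert b (B₀ ∩ B) ⊆ ((B₀ \ {x}) ∪ {b}) ∩ B := by
        rintro y (rfl | hy)
        · exact ⟨Or.inr rfl, hb.1⟩
        · exact ⟨Or.inl ⟨hy.1, fun h => hxB (h ▸ hy.2)⟩, hy.2⟩
      have hcard1 : (insert b (B₀ ∩ B)).ncard = (B₀ ∩ B).ncard + 1 :=
        Set.ncard_insert_of_notMem (fun h => hbnB₀ h.1) (hB₀fin.subset inter_subset_left)
      have hlt : (B₀ ∩ B).ncard < (((B₀ \ {x}) ∪ {b}) ∩ B).ncard := by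
        have := Set.ncard_le_ncard hins ((hindfin _ hbase1.indep).subset inter_subset_left)
        omega
      have := hmax hbase1 (le_of_lt hlt)
      omega
    have hsub2 : B ⊆ B₀ := by
      intro y hy
      by_contra hyB₀
      obtain ⟨K, ⟨A', hA', rfl⟩, hyK⟩ := hBsub hy
      have hKsing : B ∩ M.K A' = {y} := by
        obtain ⟨c, hc⟩ := Set.ncard_eq_one.mp (hBcard _ ⟨A', hA', rfl⟩)
        have hyc : y ∈ B ∩ M.K A' := ⟨hy, hyK⟩
        rw [hc] at hyc
        rw [hc, hyc]
      obtain ⟨e, he, heB⟩ := haug A' hA' B₀ hB₀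
      have hec : e ∈ B ∩ M.K A' := ⟨hsub1 he.1, (mem_K_iff hE hr hA').mpr heB⟩
      rw [hKsing] at hec
      exact hyB₀ (hec ▸ he.1)
    have : B = B₀ := Subset.antisymm hsub2 hsub1
    rwa [this]
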